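/- arXiv:2405.12753 — 3 statements merged into one kernel-verified Lean document; each statement's English description precedes it below -/
import Mathlib

section
/- Let p > 2 and let p* = p/(p-1) be its conjugate exponent. Then for all s, t ∈ (0,1) and θ₁, θ₂ ∈ (0, π/2), the inequality 1 − (s^{1/2} t^{1/2} cos θ₁ + (1−s)^{1/2}(1−t)^{1/2} cos θ₂) ≤ (p/2) · (1 − (s^{1/p} t^{(p−1)/p} cos θ₁ + (1−s)^{1/p}(1−t)^{(p−1)/p} cos θ₂)) holds. -/
/-!
Put `x = (s/t)^(1/p)` and `y = ((1-s)/(1-t))^(1/p)`. The two terms of `F_p` are then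
`t x cos θ₁` and `(1-t) y cos θ₂`, and those of `F₂` are `t x^(p/2) cos θ₁` and
`(1-t) y^(p/2) cos θ₂`. Bernoulli's inequality `x^(p/2) ≥ 1 + (p/2)(x - 1)`, weighted by
`t cos θ₁ ≥ 0` and `(1-t) cos θ₂ ≥ 0`, whose sum is at most `1`, gives the comparison.
-/

open Real Set

lemma mul_div_rpow_eq_rpow_mul_rpow_one_sub {a b : ℝ} (ha : 0 < a) (hb : 0 < b) (r : ℝ) :
    b * (a / b) ^ r = a ^ r * b ^ (1 - r) := by
  have hbr : 0 < b ^ r := rpow_pos_of_pos hb r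
  rw [rpow_sub hb, rpow_one, div_rpow ha.le hb.le]
  field_simp

lemma rpow_one_div_mul_rpow_eq_mul_div_rpow {s t p : ℝ} (hs : 0 < s) (ht : 0 < t) (hp : p ≠ 0) :
    s ^ (1 / p) * t ^ ((p - 1) / p) = t * (s / t) ^ (1 / p) := by
  rw [mul_div_rpow_eq_rpow_mul_rpow_one_sub hs ht]
  congr 2
  field_simp

lemma rpow_half_mul_rpow_half_eq_mul_div_rpow_rpow {s t p : ℝ} (hs : 0 < s) (ht : 0 < t)
    (hp : p ≠ 0) :
    s ^ ((1 : ℝ) / 2) * t ^ ((1 : ℝ) / 2) = t * ((s / t) ^ (1 / p)) ^ (p / 2) := by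
  rw [← rpow_mul (div_pos hs ht).le, one_div_mul_eq_div, div_div_cancel_left' hp,
    mul_div_rpow_eq_rpow_mul_rpow_one_sub hs ht]
  norm_num

lemma mul_one_add_mul_sub_one_le_mul_rpow {q a x : ℝ} (hq : 1 ≤ q) (ha : 0 ≤ a) (hx : 0 ≤ x) :
    a * (1 + q * (x - 1)) ≤ a * x ^ q := by
  have bernoulli := one_add_mul_self_le_rpow_one_add (s := x - 1) (by linarith) hq
  rw [add_sub_cancel] at bernoulli
  exact mul_le_mul_of_nonneg_left bernoulli ha

lemma one_sub_add_mul_rpow_le_mul_one_sub {q a b x y : ℝ} (hq : 1 ≤ q) (ha : 0 ≤ a)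
    (hb : 0 ≤ b) (hab : a + b ≤ 1) (hx : 0 ≤ x) (hy : 0 ≤ y) :
    1 - (a * x ^ q + b * y ^ q) ≤ q * (1 - (a * x + b * y)) := by
  have hax := mul_one_add_mul_sub_one_le_mul_rpow hq ha hx
  have hby := mul_one_add_mul_sub_one_le_mul_rpow hq hb hy
  nlinarith [mul_nonneg (sub_nonneg.2 hq) (sub_nonneg.2 hab)]

/-- For p > 2 : 1 − F_{B²} ≤ (p/2)(1 − F_{Ω_p}) on (0,1)² × (0,π/2)². -/
theorem stmt2 (p : ℝ) (hp : 2 < p)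
    (s t θ₁ θ₂ : ℝ) (hs : s ∈ Ioo (0 : ℝ) 1) (ht : t ∈ Ioo (0 : ℝ) 1)
    (hθ₁ : θ₁ ∈ Ioo 0 (π / 2)) (hθ₂ : θ₂ ∈ Ioo 0 (π / 2)) :
    1 - (s ^ ((1 : ℝ) / 2) * t ^ ((1 : ℝ) / 2) * Real.cos θ₁ +
        (1 - s) ^ ((1 : ℝ) / 2) * (1 - t) ^ ((1 : ℝ) / 2) * Real.cos θ₂) ≤
      (p / 2) * (1 - (s ^ (1 / p) * t ^ ((p - 1) / p) * Real.cos θ₁ +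
        (1 - s) ^ (1 / p) * (1 - t) ^ ((p - 1) / p) * Real.cos θ₂)) := by
  obtain ⟨hs₀, hs₁⟩ := hs
  obtain ⟨ht₀, ht₁⟩ := ht
  have hs₁' : 0 < 1 - s := sub_pos.2 hs₁
  have ht₁' : 0 < 1 - t := sub_pos.2 ht₁
  have hp₀ : p ≠ 0 := by linarith
  have hc₁ : 0 ≤ cos θ₁ := cos_nonneg_of_mem_Icc ⟨by linarith [hθ₁.1, pi_pos], hθ₁.2.le⟩
  have hc₂ : 0 ≤ cos θ₂ := cos_nonneg_of_mem_Icc ⟨by linarith [hθ₂.1, pi_pos], hθ₂.2.le⟩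
  have hweights : t * cos θ₁ + (1 - t) * cos θ₂ ≤ 1 := by
    nlinarith [cos_le_one θ₁, cos_le_one θ₂]
  rw [rpow_one_div_mul_rpow_eq_mul_div_rpow hs₀ ht₀ hp₀,
    rpow_one_div_mul_rpow_eq_mul_div_rpow hs₁' ht₁' hp₀,
    rpow_half_mul_rpow_half_eq_mul_div_rpow_rpow hs₀ ht₀ hp₀,
    rpow_half_mul_rpow_half_eq_mul_div_rpow_rpow hs₁' ht₁' hp₀]
  have key := one_sub_add_mul_rpow_le_mul_one_sub (q := p / 2) (by linarith)
    (mul_nonneg ht₀.le hc₁) (mul_nonneg ht₁'.le hc₂) hweights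
    (rpow_nonneg (div_pos hs₀ ht₀).le (1 / p)) (rpow_nonneg (div_pos hs₁' ht₁').le (1 / p))
  linarith
end

section
/- For R > 0 and n ≥ 1, there exist constants C₁, C₂ > 0 (depending only on n and R) such that for all z ∈ ℂⁿ with ‖z‖ > 1, C₁ e^{2R‖z‖} ‖z‖^{-(n−1/2)} ≤ ∫_{∂B(0,R)} e^{2 Re⟨ζ, z⟩} dσ(ζ) ≤ C₂ e^{2R‖z‖} ‖z‖^{-(n−1/2)}, where σ is the surface area measure on the sphere ∂B(0,R) ⊂ ℂⁿ and ⟨ζ,z⟩ = ζ₁z₁ + ⋯ + ζₙzₙ. -/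
/-!
Write `w = z̄`, so that `Re ⟨ζ, z⟩ = ⟪w, ζ⟫` for the real inner product of `ℂⁿ ≅ ℝ²ⁿ`, and put
`t = ‖w‖`, `e = w / t`, `m = 2n - 1`. The integrand is `e^{2Rt} e^{-2t (R - ⟪e, ζ⟫)}`, so
everything rests on the measure of the caps `{ζ ∈ S_R | R - ⟪e, ζ⟫ ≤ h}`, which is comparable
to `(Rh)^{m/2}` uniformly in `e`: the orthogonal projection onto `eᗮ` is `1`-Lipschitz and maps
the cap onto a set containing an `m`-disc of radius `√(Rh)`, while for `h ≤ R/4` the cap is the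
image of an `m`-disc of radius `√(2Rh)` under a `2`-Lipschitz graph map; and `μH[m]` of an
`m`-disc of radius `r` is a constant times `r^m`. The cap of depth `R/t`, on which the integrand
is at least `e^{2Rt - 2R}`, gives the lower bound. Cutting the sphere into the layers
`k ≤ 2t (R - ⟪e, ζ⟫) < k + 1` bounds the integral by `e^{2Rt} Σₖ e^{-k} ((k + 1)/t)^{m/2}`.
-/

open MeasureTheory Real Set

noncomputable instance euclideanComplexMeasurableSpace (n : ℕ) :
    MeasurableSpace (EuclideanSpace ℂ (Fin n)) := borel _

instance euclideanComplexBorelSpace (n : ℕ) :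
    BorelSpace (EuclideanSpace ℂ (Fin n)) := ⟨rfl⟩

open Metric Module
open scoped ENNReal RealInnerProductSpace

theorem abs_sqrt_sub_sq_sub_sqrt_sub_sq_le {R s u v : ℝ} (hu : 0 ≤ u) (hv : 0 ≤ v)
    (hus : u ≤ s) (hvs : v ≤ s) (hsR : 2 * s ^ 2 ≤ R ^ 2) :
    |√(R ^ 2 - u ^ 2) - √(R ^ 2 - v ^ 2)| ≤ |u - v| := by
  set a := √(R ^ 2 - u ^ 2)
  set b := √(R ^ 2 - v ^ 2)
  have ha : a ^ 2 = R ^ 2 - u ^ 2 := sq_sqrt (by nlinarith)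
  have hb : b ^ 2 = R ^ 2 - v ^ 2 := sq_sqrt (by nlinarith)
  have hsa : s ≤ a := le_sqrt_of_sq_le (by nlinarith)
  have hsb : s ≤ b := le_sqrt_of_sq_le (by nlinarith)
  have key : |a - b| * (a + b) = |u - v| * (u + v) := by
    rw [← abs_of_nonneg (by linarith : 0 ≤ a + b), ← abs_of_nonneg (by linarith : 0 ≤ u + v),
      ← abs_mul, ← abs_mul, ← abs_neg ((u - v) * (u + v))]
    congr 1
    linear_combination ha - hb
  rcases (by linarith : 0 ≤ a + b).eq_or_lt with hab | hab
  · have : a = b := by linarith [sqrt_nonneg (R ^ 2 - u ^ 2), sqrt_nonneg (R ^ 2 - v ^ 2)]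
    simp [this]
  · refine le_of_mul_le_mul_right ?_ hab
    rw [key]
    exact mul_le_mul_of_nonneg_left (by linarith) (abs_nonneg _)

theorem sqrt_inv_pow_eq_rpow {t : ℝ} (ht : 0 ≤ t) (m : ℕ) : √t⁻¹ ^ m = t ^ (-((m : ℝ) / 2)) := by
  rw [sqrt_eq_rpow, ← rpow_natCast, ← rpow_mul (inv_nonneg.2 ht), inv_rpow ht, ← rpow_neg ht]
  ring_nf

theorem summable_succ_pow_mul_geometric (m : ℕ) {r : ℝ} (hr₀ : 0 < r) (hr₁ : r < 1) :
    Summable fun k : ℕ => ((k : ℝ) + 1) ^ m * r ^ k := by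
  have h := (summable_nat_add_iff (f := fun k : ℕ => (k : ℝ) ^ m * r ^ k) 1).2
    (summable_pow_mul_geometric_of_norm_lt_one m (by rwa [norm_of_nonneg hr₀.le]))
  refine (h.mul_left r⁻¹).congr fun k => ?_
  push_cast
  rw [pow_succ]
  field_simp

theorem setLIntegral_exp_neg_mul_le {α : Type*} [MeasurableSpace α] (μ : Measure α) {S : Set α}
    {u : α → ℝ} (hu : ∀ x ∈ S, 0 ≤ u x) {C : ℝ} (hC : 0 ≤ C) {m : ℕ}
    (hμ : ∀ h, 0 ≤ h → μ {x ∈ S | u x ≤ h} ≤ ENNReal.ofReal (C * √h ^ m)) {s : ℝ} (hs : 0 < s) :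
    ∫⁻ x in S, ENNReal.ofReal (exp (-(s * u x))) ∂μ ≤
      ENNReal.ofReal (C * (∑' k : ℕ, ((k : ℝ) + 1) ^ m * exp (-1) ^ k) * √s⁻¹ ^ m) := by
  set A : ℕ → Set α := fun k => {x ∈ S | k ≤ s * u x ∧ s * u x < k + 1}
  have hcover : S ⊆ ⋃ k, A k := fun x hx =>
    mem_iUnion.2 ⟨⌊s * u x⌋₊, hx, Nat.floor_le (by have := hu x hx; positivity),
      Nat.lt_floor_add_one _⟩
  have hlayer : ∀ k : ℕ, ∫⁻ x in A k, ENNReal.ofReal (exp (-(s * u x))) ∂μ ≤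
      ENNReal.ofReal (C * √s⁻¹ ^ m * (((k : ℝ) + 1) ^ m * exp (-1) ^ k)) := by
    intro k
    have hA : A k ⊆ {x ∈ S | u x ≤ (k + 1) / s} := fun x hx =>
      ⟨hx.1, by rw [le_div_iff₀ hs]; linarith [hx.2.2]⟩
    have hsqrt : √(((k : ℝ) + 1) / s) ^ m ≤ ((k : ℝ) + 1) ^ m * √s⁻¹ ^ m := by
      rw [div_eq_mul_inv, sqrt_mul (by positivity), mul_pow]
      gcongr
      exact sqrt_le_self_iff.2 (Or.inr (by linarith [k.cast_nonneg (α := ℝ)]))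
    calc ∫⁻ x in A k, ENNReal.ofReal (exp (-(s * u x))) ∂μ
        ≤ ∫⁻ _ in A k, ENNReal.ofReal (exp (-1) ^ k) ∂μ := by
          refine setLIntegral_mono measurable_const fun x hx => ENNReal.ofReal_le_ofReal ?_
          rw [← exp_nat_mul]
          exact exp_le_exp.2 (by linarith [hx.2.1])
      _ = ENNReal.ofReal (exp (-1) ^ k) * μ (A k) := setLIntegral_const _ _
      _ ≤ ENNReal.ofReal (exp (-1) ^ k) * ENNReal.ofReal (C * √(((k : ℝ) + 1) / s) ^ m) := by
          gcongr
          exact (measure_mono hA).trans (hμ _ (by positivity))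
      _ ≤ _ := by
          rw [← ENNReal.ofReal_mul (by positivity)]
          refine ENNReal.ofReal_le_ofReal ?_
          calc exp (-1) ^ k * (C * √(((k : ℝ) + 1) / s) ^ m)
              ≤ exp (-1) ^ k * (C * (((k : ℝ) + 1) ^ m * √s⁻¹ ^ m)) := by gcongr
            _ = _ := by ring
  have hsum := (summable_succ_pow_mul_geometric m (exp_pos (-1))
    (exp_lt_one_iff.2 (by norm_num))).mul_left (C * √s⁻¹ ^ m)
  calc ∫⁻ x in S, ENNReal.ofReal (exp (-(s * u x))) ∂μ
      ≤ ∫⁻ x in ⋃ k, A k, ENNReal.ofReal (exp (-(s * u x))) ∂μ := lintegral_mono_set hcover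
    _ ≤ ∑' k, ∫⁻ x in A k, ENNReal.ofReal (exp (-(s * u x))) ∂μ := lintegral_iUnion_le _ _
    _ ≤ ∑' k : ℕ, ENNReal.ofReal (C * √s⁻¹ ^ m * (((k : ℝ) + 1) ^ m * exp (-1) ^ k)) :=
        ENNReal.tsum_le_tsum hlayer
    _ = _ := by
        rw [← ENNReal.ofReal_tsum_of_nonneg (fun k => by positivity) hsum, tsum_mul_left]
        ring_nf

theorem hausdorffMeasure_closedBall_eq_pow_mul {V : Type*} [NormedAddCommGroup V]
    [InnerProductSpace ℝ V] [FiniteDimensional ℝ V] [MeasurableSpace V] [BorelSpace V] (x : V)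
    {r : ℝ} (hr : 0 ≤ r) :
    μH[finrank ℝ V] (closedBall x r) = ENNReal.ofReal (r ^ finrank ℝ V) *
      μH[finrank ℝ V] (closedBall (0 : EuclideanSpace ℝ (Fin (finrank ℝ V))) 1) := by
  set f := (stdOrthonormalBasis ℝ V).repr
  rw [← f.isometry.hausdorffMeasure_image (Or.inl (Nat.cast_nonneg _)), f.image_closedBall,
    Measure.addHaar_closedBall' _ _ hr, finrank_euclideanSpace_fin]

theorem hausdorffMeasure_submodule_inter_closedBall {E : Type*} [NormedAddCommGroup E]
    [InnerProductSpace ℝ E] [MeasurableSpace E] [BorelSpace E] (K : Submodule ℝ E)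
    [FiniteDimensional ℝ K] {r : ℝ} (hr : 0 ≤ r) :
    μH[finrank ℝ K] ((K : Set E) ∩ closedBall 0 r) = ENNReal.ofReal (r ^ finrank ℝ K) *
      μH[finrank ℝ K] (closedBall (0 : EuclideanSpace ℝ (Fin (finrank ℝ K))) 1) := by
  have hK : (K : Set E) ∩ closedBall 0 r = K.subtypeₗᵢ '' closedBall (0 : K) r := by
    ext x
    simp [and_comm]
  rw [hK, K.subtypeₗᵢ.isometry.hausdorffMeasure_image (Or.inl (Nat.cast_nonneg _)),
    hausdorffMeasure_closedBall_eq_pow_mul _ hr]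

theorem exists_hausdorffMeasure_unit_closedBall_eq_ofReal (m : ℕ) :
    ∃ b, 0 < b ∧ μH[m] (closedBall (0 : EuclideanSpace ℝ (Fin m)) 1) = ENNReal.ofReal b :=
  ⟨_, ENNReal.toReal_pos (measure_closedBall_pos _ _ one_pos).ne' measure_closedBall_lt_top.ne,
    (ENNReal.ofReal_toReal measure_closedBall_lt_top.ne).symm⟩

section SphericalCap

variable {E : Type*} [NormedAddCommGroup E] [InnerProductSpace ℝ E]

def sphericalCap (e : E) (R h : ℝ) : Set E := {x ∈ sphere (0 : E) R | R - ⟪e, x⟫ ≤ h}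

variable {e : E}

theorem norm_smul_add_sq_of_mem_orthogonal (he : ‖e‖ = 1) {y : E} (hy : y ∈ (ℝ ∙ e)ᗮ) (a : ℝ) :
    ‖a • e + y‖ ^ 2 = a ^ 2 + ‖y‖ ^ 2 := by
  rw [Submodule.mem_orthogonal_singleton_iff_inner_right] at hy
  rw [norm_add_sq_real, real_inner_smul_left, hy, norm_smul, he, norm_eq_abs, mul_one, sq_abs]
  ring

theorem inner_smul_add_of_mem_orthogonal (he : ‖e‖ = 1) {y : E} (hy : y ∈ (ℝ ∙ e)ᗮ) (a : ℝ) :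
    ⟪e, a • e + y⟫ = a := by
  rw [Submodule.mem_orthogonal_singleton_iff_inner_right] at hy
  rw [inner_add_right, real_inner_smul_right, real_inner_self_eq_norm_sq, he, hy]
  ring

theorem starProjection_smul_add_of_mem_orthogonal {y : E} (hy : y ∈ (ℝ ∙ e)ᗮ) (a : ℝ) :
    (ℝ ∙ e)ᗮ.starProjection (a • e + y) = y := by
  rw [map_add, map_smul, Submodule.starProjection_orthogonalComplement_singleton_eq_zero,
    smul_zero, zero_add, Submodule.starProjection_eq_self_iff.2 hy]

theorem inner_smul_add_starProjection (he : ‖e‖ = 1) (x : E) :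
    ⟪e, x⟫ • e + (ℝ ∙ e)ᗮ.starProjection x = x := by
  rw [← Submodule.starProjection_unit_singleton ℝ he,
    Submodule.starProjection_add_starProjection_orthogonal]

theorem finrank_orthogonal_span_unit {m : ℕ} (hE : finrank ℝ E = m + 1) (he : ‖e‖ = 1) :
    finrank ℝ (ℝ ∙ e)ᗮ = m :=
  haveI : Fact (finrank ℝ E = m + 1) := ⟨hE⟩
  Submodule.finrank_orthogonal_span_singleton (by rintro rfl; simp at he)

theorem norm_inv_norm_smul_self {w : E} (hw : 0 < ‖w‖) : ‖‖w‖⁻¹ • w‖ = 1 := by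
  rw [norm_smul, norm_inv, norm_norm, inv_mul_cancel₀ hw.ne']

theorem real_inner_eq_norm_mul_inner_inv_norm_smul {w : E} (hw : 0 < ‖w‖) (ζ : E) :
    ⟪w, ζ⟫ = ‖w‖ * ⟪‖w‖⁻¹ • w, ζ⟫ := by
  rw [real_inner_smul_left, ← mul_assoc, mul_inv_cancel₀ hw.ne', one_mul]

variable [MeasurableSpace E] {R : ℝ} {w : E}

theorem setLIntegral_exp_inner_le (μ : Measure E) (hw : 0 < ‖w‖) {C : ℝ} (hC : 0 ≤ C) {m : ℕ}
    (hcap : ∀ h, 0 ≤ h → μ (sphericalCap (‖w‖⁻¹ • w) R h) ≤ ENNReal.ofReal (C * √h ^ m)) :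
    ∫⁻ ζ in sphere 0 R, ENNReal.ofReal (exp (2 * ⟪w, ζ⟫)) ∂μ ≤ ENNReal.ofReal (exp (2 * R * ‖w‖) *
      (C * (∑' k : ℕ, ((k : ℝ) + 1) ^ m * exp (-1) ^ k) * √(2 * ‖w‖)⁻¹ ^ m)) := by
  have hu : ∀ ζ ∈ sphere (0 : E) R, 0 ≤ R - ⟪‖w‖⁻¹ • w, ζ⟫ := fun ζ hζ => by
    have := real_inner_le_norm (‖w‖⁻¹ • w) ζ
    rw [norm_inv_norm_smul_self hw, one_mul, mem_sphere_zero_iff_norm.1 hζ] at this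
    exact sub_nonneg.2 this
  calc ∫⁻ ζ in sphere 0 R, ENNReal.ofReal (exp (2 * ⟪w, ζ⟫)) ∂μ
      = ∫⁻ ζ in sphere 0 R, ENNReal.ofReal (exp (2 * R * ‖w‖)) *
          ENNReal.ofReal (exp (-(2 * ‖w‖ * (R - ⟪‖w‖⁻¹ • w, ζ⟫)))) ∂μ := by
        refine lintegral_congr fun ζ => ?_
        rw [← ENNReal.ofReal_mul (exp_pos _).le, ← exp_add,
          real_inner_eq_norm_mul_inner_inv_norm_smul hw]
        ring_nf
    _ = ENNReal.ofReal (exp (2 * R * ‖w‖)) * ∫⁻ ζ in sphere 0 R,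
          ENNReal.ofReal (exp (-(2 * ‖w‖ * (R - ⟪‖w‖⁻¹ • w, ζ⟫)))) ∂μ :=
        lintegral_const_mul' _ _ ENNReal.ofReal_ne_top
    _ ≤ _ := by
        rw [ENNReal.ofReal_mul (exp_pos _).le]
        gcongr
        exact setLIntegral_exp_neg_mul_le μ hu hC hcap (by positivity)

variable [BorelSpace E]

theorem le_setLIntegral_exp_inner (μ : Measure E) (hw : 0 < ‖w‖) :
    ENNReal.ofReal (exp (2 * R * ‖w‖) * exp (-(2 * R))) *
        μ (sphericalCap (‖w‖⁻¹ • w) R (R / ‖w‖)) ≤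
      ∫⁻ ζ in sphere 0 R, ENNReal.ofReal (exp (2 * ⟪w, ζ⟫)) ∂μ := by
  rw [← setLIntegral_const]
  refine (setLIntegral_mono (by fun_prop) fun ζ hζ => ENNReal.ofReal_le_ofReal ?_).trans
    (lintegral_mono_set (sep_subset _ _))
  rw [← exp_add, exp_le_exp, real_inner_eq_norm_mul_inner_inv_norm_smul hw ζ]
  have := mul_le_mul_of_nonneg_left hζ.2 hw.le
  rw [mul_div_cancel₀ _ hw.ne'] at this
  generalize ⟪‖w‖⁻¹ • w, ζ⟫ = a at this ⊢
  linarith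

theorem hausdorffMeasure_sphericalCap_le (he : ‖e‖ = 1) {h d : ℝ} (hh : 0 ≤ h) (hhR : 4 * h ≤ R)
    (hd : 0 ≤ d) :
    μH[d] (sphericalCap e R h) ≤
      2 ^ d * μH[d] (((ℝ ∙ e)ᗮ : Set E) ∩ closedBall 0 √(2 * R * h)) := by
  set s := √(2 * R * h)
  have hs : s ^ 2 = 2 * R * h := sq_sqrt (by nlinarith)
  have hsR : 2 * s ^ 2 ≤ R ^ 2 := by nlinarith
  set g : E → E := fun y => √(R ^ 2 - ‖y‖ ^ 2) • e + y
  have hcap : sphericalCap e R h ⊆ g '' (((ℝ ∙ e)ᗮ : Set E) ∩ closedBall 0 s) := by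
    rintro x ⟨hx, hxh⟩
    rw [mem_sphere_zero_iff_norm] at hx
    set y := (ℝ ∙ e)ᗮ.starProjection x
    have hyK : y ∈ (ℝ ∙ e)ᗮ := Submodule.starProjection_apply_mem _ x
    have hxy : R ^ 2 = ⟪e, x⟫ ^ 2 + ‖y‖ ^ 2 := by
      rw [← hx, ← norm_smul_add_sq_of_mem_orthogonal he hyK, inner_smul_add_starProjection he]
    have hex : 0 ≤ ⟪e, x⟫ := by linarith
    refine ⟨y, ⟨hyK, mem_closedBall_zero_iff.2 (le_sqrt_of_sq_le (by nlinarith))⟩, ?_⟩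
    simp only [g]
    rw [show R ^ 2 - ‖y‖ ^ 2 = ⟪e, x⟫ ^ 2 by linarith, sqrt_sq hex,
      inner_smul_add_starProjection he]
  have hg : LipschitzOnWith 2 g (((ℝ ∙ e)ᗮ : Set E) ∩ closedBall 0 s) := by
    refine LipschitzOnWith.of_dist_le_mul fun y hy y' hy' => ?_
    simp only [mem_inter_iff, SetLike.mem_coe, mem_closedBall_zero_iff] at hy hy'
    have hsq : dist (g y) (g y') ^ 2 ≤ (2 * dist y y') ^ 2 := by
      have hroot := abs_sqrt_sub_sq_sub_sqrt_sub_sq_le (norm_nonneg y) (norm_nonneg y') hy.2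
        hy'.2 hsR
      have hnorm := abs_norm_sub_norm_le y y'
      rw [dist_eq_norm, dist_eq_norm, show g y - g y' =
        (√(R ^ 2 - ‖y‖ ^ 2) - √(R ^ 2 - ‖y'‖ ^ 2)) • e + (y - y') by simp only [g, sub_smul]; abel,
        norm_smul_add_sq_of_mem_orthogonal he (Submodule.sub_mem _ hy.1 hy'.1), ← sq_abs (_ - _)]
      nlinarith [abs_nonneg (√(R ^ 2 - ‖y‖ ^ 2) - √(R ^ 2 - ‖y'‖ ^ 2)), abs_nonneg (‖y‖ - ‖y'‖)]
    rw [NNReal.coe_two]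
    exact (pow_le_pow_iff_left₀ dist_nonneg (by positivity) two_ne_zero).1 hsq
  calc μH[d] (sphericalCap e R h) ≤ μH[d] (g '' (((ℝ ∙ e)ᗮ : Set E) ∩ closedBall 0 s)) :=
        measure_mono hcap
    _ ≤ _ := by simpa using hg.hausdorffMeasure_image_le hd

theorem hausdorffMeasure_le_sphericalCap (he : ‖e‖ = 1) {h d : ℝ} (hh : 0 ≤ h) (hhR : h ≤ R)
    (hd : 0 ≤ d) :
    μH[d] (((ℝ ∙ e)ᗮ : Set E) ∩ closedBall 0 √(R * h)) ≤ μH[d] (sphericalCap e R h) := by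
  set P := (ℝ ∙ e)ᗮ.starProjection
  have hdisc : ((ℝ ∙ e)ᗮ : Set E) ∩ closedBall 0 √(R * h) ⊆ P '' sphericalCap e R h := by
    rintro y ⟨hyK, hy⟩
    rw [mem_closedBall_zero_iff] at hy
    have hy2 : ‖y‖ ^ 2 ≤ R * h := by
      calc ‖y‖ ^ 2 ≤ √(R * h) ^ 2 := pow_le_pow_left₀ (norm_nonneg y) hy 2
        _ = R * h := sq_sqrt (by nlinarith)
    have ha : √(R ^ 2 - ‖y‖ ^ 2) ^ 2 = R ^ 2 - ‖y‖ ^ 2 := sq_sqrt (by nlinarith)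
    refine ⟨√(R ^ 2 - ‖y‖ ^ 2) • e + y, ⟨?_, ?_⟩,
      starProjection_smul_add_of_mem_orthogonal hyK _⟩
    · rw [mem_sphere_zero_iff_norm, ← sq_eq_sq₀ (norm_nonneg _) (by linarith),
        norm_smul_add_sq_of_mem_orthogonal he hyK, ha]
      ring
    · rw [inner_smul_add_of_mem_orthogonal he hyK, sub_le_comm]
      exact le_sqrt_of_sq_le (by nlinarith)
  calc μH[d] (((ℝ ∙ e)ᗮ : Set E) ∩ closedBall 0 √(R * h))
      ≤ μH[d] (P '' sphericalCap e R h) := measure_mono hdisc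
    _ ≤ μH[d] (sphericalCap e R h) := by
      simpa using (Submodule.lipschitzWith_starProjection _).hausdorffMeasure_image_le hd _

variable {m : ℕ}

theorem hausdorffMeasure_sphericalCap_le_of_finrank (hE : finrank ℝ E = m + 1) (he : ‖e‖ = 1)
    {h : ℝ} (hh : 0 ≤ h) (hhR : 4 * h ≤ R) :
    μH[m] (sphericalCap e R h) ≤ ENNReal.ofReal (2 ^ m * √(2 * R * h) ^ m) *
      μH[m] (closedBall (0 : EuclideanSpace ℝ (Fin m)) 1) := by
  have := Module.finite_of_finrank_eq_succ hE
  have hK := finrank_orthogonal_span_unit hE he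
  calc μH[m] (sphericalCap e R h)
      ≤ 2 ^ (m : ℝ) * μH[m] (((ℝ ∙ e)ᗮ : Set E) ∩ closedBall 0 √(2 * R * h)) :=
        hausdorffMeasure_sphericalCap_le he hh hhR m.cast_nonneg
    _ = _ := by
        subst hK
        rw [hausdorffMeasure_submodule_inter_closedBall _ (sqrt_nonneg _), ← mul_assoc,
          ENNReal.rpow_natCast, ENNReal.ofReal_mul (by positivity),
          ENNReal.ofReal_pow zero_le_two, ENNReal.ofReal_ofNat]

theorem le_hausdorffMeasure_sphericalCap_of_finrank (hE : finrank ℝ E = m + 1) (he : ‖e‖ = 1)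
    {h : ℝ} (hh : 0 ≤ h) (hhR : h ≤ R) :
    ENNReal.ofReal (√(R * h) ^ m) * μH[m] (closedBall (0 : EuclideanSpace ℝ (Fin m)) 1) ≤
      μH[m] (sphericalCap e R h) := by
  have := Module.finite_of_finrank_eq_succ hE
  have hK := finrank_orthogonal_span_unit hE he
  calc _ = μH[m] (((ℝ ∙ e)ᗮ : Set E) ∩ closedBall 0 √(R * h)) := by
        subst hK
        rw [hausdorffMeasure_submodule_inter_closedBall _ (sqrt_nonneg _)]
    _ ≤ _ := hausdorffMeasure_le_sphericalCap he hh hhR m.cast_nonneg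

theorem hausdorffMeasure_sphere_lt_top (hE : finrank ℝ E = m + 1) (hR : 0 < R) :
    μH[m] (sphere (0 : E) R) < ∞ := by
  have := Module.finite_of_finrank_eq_succ hE
  refine (isCompact_sphere 0 R).measure_lt_top_of_nhdsWithin fun x hx => ?_
  rw [mem_sphere_zero_iff_norm] at hx
  have he : ‖R⁻¹ • x‖ = 1 := by
    rw [norm_smul, hx, norm_inv, norm_of_nonneg hR.le, inv_mul_cancel₀ hR.ne']
  refine ⟨sphericalCap (R⁻¹ • x) R (R / 8), mem_nhdsWithin.2 ⟨ball x (R / 2), isOpen_ball,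
    mem_ball_self (by positivity), fun y ⟨hyx, hy⟩ => ⟨hy, ?_⟩⟩, ?_⟩
  · rw [mem_ball, dist_eq_norm] at hyx
    rw [mem_sphere_zero_iff_norm] at hy
    have hxy := norm_sub_sq_real y x
    rw [hy, hx, real_inner_comm] at hxy
    have : R * (R - ⟪R⁻¹ • x, y⟫) ≤ R * (R / 8) := by
      rw [real_inner_smul_left, mul_sub, ← mul_assoc, mul_inv_cancel₀ hR.ne', one_mul]
      nlinarith [norm_nonneg (y - x)]
    exact le_of_mul_le_mul_left this hR
  · exact (hausdorffMeasure_sphericalCap_le_of_finrank hE he (by positivity)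
      (by linarith)).trans_lt (ENNReal.mul_lt_top ENNReal.ofReal_lt_top measure_closedBall_lt_top)

theorem exists_hausdorffMeasure_sphericalCap_le (hE : finrank ℝ E = m + 1) (hR : 0 < R) :
    ∃ C, 0 < C ∧ ∀ e : E, ‖e‖ = 1 → ∀ h, 0 ≤ h →
      μH[m] (sphericalCap e R h) ≤ ENNReal.ofReal (C * √h ^ m) := by
  obtain ⟨b, hb, hβ⟩ := exists_hausdorffMeasure_unit_closedBall_eq_ofReal m
  obtain ⟨σ, hσ, hS⟩ : ∃ σ, 0 ≤ σ ∧ μH[m] (sphere (0 : E) R) = ENNReal.ofReal σ :=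
    ⟨_, ENNReal.toReal_nonneg,
      (ENNReal.ofReal_toReal (hausdorffMeasure_sphere_lt_top hE hR).ne).symm⟩
  have hσ' : 0 ≤ σ * √(4 / R) ^ m := by positivity
  have hb' : 0 ≤ 2 ^ m * √(2 * R) ^ m * b := by positivity
  refine ⟨2 ^ m * √(2 * R) ^ m * b + σ * √(4 / R) ^ m, by positivity, fun e he h hh => ?_⟩
  rcases le_or_gt (4 * h) R with hhR | hRh
  · calc μH[m] (sphericalCap e R h)
        ≤ ENNReal.ofReal (2 ^ m * √(2 * R * h) ^ m) *
            μH[m] (closedBall (0 : EuclideanSpace ℝ (Fin m)) 1) :=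
          hausdorffMeasure_sphericalCap_le_of_finrank hE he hh hhR
      _ = ENNReal.ofReal (2 ^ m * √(2 * R) ^ m * b * √h ^ m) := by
          rw [hβ, ← ENNReal.ofReal_mul (by positivity), sqrt_mul (by positivity), mul_pow]
          ring_nf
      _ ≤ _ := ENNReal.ofReal_le_ofReal (by gcongr; linarith)
  · have hone : 1 ≤ √(4 / R) ^ m * √h ^ m := by
      rw [← mul_pow, ← sqrt_mul (by positivity)]
      refine one_le_pow₀ (one_le_sqrt.2 ?_)
      rw [div_mul_eq_mul_div, one_le_div hR]
      linarith
    calc μH[m] (sphericalCap e R h) ≤ μH[m] (sphere (0 : E) R) := measure_mono (sep_subset _ _)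
      _ ≤ ENNReal.ofReal (σ * √(4 / R) ^ m * √h ^ m) := by
          rw [hS, mul_assoc]
          exact ENNReal.ofReal_le_ofReal (le_mul_of_one_le_right hσ hone)
      _ ≤ _ := ENNReal.ofReal_le_ofReal (by gcongr; linarith)

theorem exists_le_hausdorffMeasure_sphericalCap (hE : finrank ℝ E = m + 1) (hR : 0 < R) :
    ∃ c, 0 < c ∧ ∀ e : E, ‖e‖ = 1 → ∀ h, 0 ≤ h → h ≤ R →
      ENNReal.ofReal (c * √h ^ m) ≤ μH[m] (sphericalCap e R h) := by
  obtain ⟨b, hb, hβ⟩ := exists_hausdorffMeasure_unit_closedBall_eq_ofReal m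
  refine ⟨√R ^ m * b, by positivity, fun e he h hh hhR => ?_⟩
  refine le_trans (le_of_eq ?_) (le_hausdorffMeasure_sphericalCap_of_finrank hE he hh hhR)
  rw [hβ, ← ENNReal.ofReal_mul (by positivity), sqrt_mul hR.le, mul_pow]
  ring_nf

theorem exists_bounds_integral_exp_inner_sphere (hE : finrank ℝ E = m + 1) (hR : 0 < R) :
    ∃ C₁ C₂ : ℝ, 0 < C₁ ∧ 0 < C₂ ∧ ∀ w : E, 1 < ‖w‖ →
      C₁ * exp (2 * R * ‖w‖) * ‖w‖ ^ (-((m : ℝ) / 2)) ≤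
        ∫ ζ in sphere (0 : E) R, exp (2 * ⟪w, ζ⟫) ∂μH[m] ∧
      ∫ ζ in sphere (0 : E) R, exp (2 * ⟪w, ζ⟫) ∂μH[m] ≤
        C₂ * exp (2 * R * ‖w‖) * ‖w‖ ^ (-((m : ℝ) / 2)) := by
  obtain ⟨C, hC, hcap_le⟩ := exists_hausdorffMeasure_sphericalCap_le hE hR
  obtain ⟨c, hc, le_hcap⟩ := exists_le_hausdorffMeasure_sphericalCap hE hR
  have hL : 0 < ∑' k : ℕ, ((k : ℝ) + 1) ^ m * exp (-1) ^ k :=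
    (summable_succ_pow_mul_geometric m (exp_pos _) (exp_lt_one_iff.2 (by norm_num))).tsum_pos
      (fun k => by positivity) 0 (by simp)
  refine ⟨exp (-(2 * R)) * c * √R ^ m, C * (∑' k : ℕ, ((k : ℝ) + 1) ^ m * exp (-1) ^ k) *
    √2⁻¹ ^ m, by positivity, by positivity, fun w hw => ?_⟩
  have hw₀ : 0 < ‖w‖ := one_pos.trans hw
  have he := norm_inv_norm_smul_self hw₀
  have hupper := setLIntegral_exp_inner_le μH[m] hw₀ hC.le (hcap_le _ he)
  have hlower := (mul_le_mul_right (le_hcap _ he (R / ‖w‖) (by positivity)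
    (div_le_self hR.le hw.le)) _).trans (le_setLIntegral_exp_inner μH[m] hw₀)
  rw [← ENNReal.ofReal_mul (by positivity)] at hlower
  rw [integral_eq_lintegral_of_nonneg_ae (ae_of_all _ fun _ => (exp_pos _).le)
    (by fun_prop : Continuous _).aestronglyMeasurable, ← sqrt_inv_pow_eq_rpow hw₀.le]
  constructor
  · refine le_trans (le_of_eq ?_)
      (ENNReal.toReal_mono (ne_top_of_le_ne_top ENNReal.ofReal_ne_top hupper) hlower)
    rw [ENNReal.toReal_ofReal (by positivity), div_eq_mul_inv, sqrt_mul hR.le, mul_pow]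
    ring
  · refine (ENNReal.toReal_le_of_le_ofReal (by positivity) hupper).trans_eq ?_
    rw [mul_inv, sqrt_mul (by positivity), mul_pow]
    ring

end SphericalCap

theorem EuclideanSpace.re_sum_mul_eq_real_inner {ι : Type*} [Fintype ι]
    (z ζ : EuclideanSpace ℂ ι) : (∑ i, ζ i * z i).re = ⟪WithLp.toLp 2 (star z.ofLp), ζ⟫ := by
  simp [real_inner_eq_re_inner ℂ, PiLp.inner_apply, Complex.re_sum, mul_comm]

theorem EuclideanSpace.norm_toLp_star {ι : Type*} [Fintype ι] (z : EuclideanSpace ℂ ι) :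
    ‖WithLp.toLp 2 (star z.ofLp)‖ = ‖z‖ := by
  simp [EuclideanSpace.norm_eq]

/-- Sharp asymptotics of the exponential integral over the sphere of radius R
in ℂⁿ (with surface measure given by the (2n−1)-dimensional Hausdorff measure). -/
theorem stmt7 (n : ℕ) (hn : 1 ≤ n) (R : ℝ) (hR : 0 < R) :
    ∃ C₁ C₂ : ℝ, 0 < C₁ ∧ 0 < C₂ ∧
      ∀ z : EuclideanSpace ℂ (Fin n), 1 < ‖z‖ →
        C₁ * Real.exp (2 * R * ‖z‖) * ‖z‖ ^ (-((n : ℝ) - 1 / 2)) ≤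
          (∫ ζ in Metric.sphere (0 : EuclideanSpace ℂ (Fin n)) R,
            Real.exp (2 * (∑ i, ζ i * z i).re) ∂(μH[(2 * n - 1 : ℝ)])) ∧
        (∫ ζ in Metric.sphere (0 : EuclideanSpace ℂ (Fin n)) R,
            Real.exp (2 * (∑ i, ζ i * z i).re) ∂(μH[(2 * n - 1 : ℝ)])) ≤
          C₂ * Real.exp (2 * R * ‖z‖) * ‖z‖ ^ (-((n : ℝ) - 1 / 2)) := by
  have hE : finrank ℝ (EuclideanSpace ℂ (Fin n)) = (2 * n - 1) + 1 := by
    rw [finrank_real_of_complex, finrank_euclideanSpace_fin]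
    omega
  have hm : (2 * n - 1 : ℝ) = ((2 * n - 1 : ℕ) : ℝ) := by
    rw [Nat.cast_sub (by omega)]
    push_cast
    ring
  have hexp : -((n : ℝ) - 1 / 2) = -(((2 * n - 1 : ℕ) : ℝ) / 2) := by
    rw [← hm]
    ring
  obtain ⟨C₁, C₂, hC₁, hC₂, hbounds⟩ := exists_bounds_integral_exp_inner_sphere hE hR
  refine ⟨C₁, C₂, hC₁, hC₂, fun z hz => ?_⟩
  simp_rw [hm, hexp, EuclideanSpace.re_sum_mul_eq_real_inner, ← EuclideanSpace.norm_toLp_star z]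
  exact hbounds _ (by rwa [EuclideanSpace.norm_toLp_star])
end

section
/- Let (a_{m₁,m₂}) be a family of complex numbers indexed by ℕ² with a_{m₁,m₂} = 0 unless m₁ = m₂ = k for some integer k > 1, and a_{k,k} = 2^{2k} k!² (4k+1)! / (k^{3/4} (2k)!² Γ(4k+5/2)^{1/2}). Then the series Σ_{(m₁,m₂)∈ℕ²} |a_{m₁,m₂}|² · (2m₁)!(2m₂)!/(2m₁+2m₂+1)! diverges. -/
/-!
By the Legendre duplication formula, `(2k)! = 4ᵏ k! Γ(k + 1/2) / √π`, the `k`-th diagonal term of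
the series equals `π k!² (4k+1)! / (k^{3/2} Γ(k + 1/2)² Γ(4k + 5/2))`. Log-convexity of `Γ` gives
`Γ(x + 1/2)² ≤ Γ(x) Γ(x + 1) = x Γ(x)²`; applied at `x = k` and at `x = 4k + 2` it bounds the term
below by `π / √(k (4k + 2)) ≥ 1 / k`, so the series dominates the harmonic series.
-/

open Real

namespace Real

theorem Gamma_add_half_sq_le {x : ℝ} (hx : 0 < x) :
    Gamma (x + 1 / 2) ^ 2 ≤ x * Gamma x ^ 2 := by
  have h := Gamma_mul_add_mul_le_rpow_Gamma_mul_rpow_Gamma hx (by linarith : 0 < x + 1)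
    one_half_pos one_half_pos (by norm_num)
  rw [show 1 / 2 * x + 1 / 2 * (x + 1) = x + 1 / 2 by ring, Gamma_add_one hx.ne',
    ← sqrt_eq_rpow, ← sqrt_eq_rpow, ← sqrt_mul (Gamma_pos_of_pos hx).le] at h
  calc Gamma (x + 1 / 2) ^ 2 ≤ √(Gamma x * (x * Gamma x)) ^ 2 :=
        pow_le_pow_left₀ (Gamma_pos_of_pos (by linarith)).le h 2
    _ = x * Gamma x ^ 2 := by
        rw [sq_sqrt (by have := Gamma_pos_of_pos hx; positivity)]; ring

theorem factorial_two_mul_eq_Gamma_add_half (k : ℕ) :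
    ((2 * k).factorial : ℝ) = 4 ^ k * k.factorial * Gamma (k + 1 / 2) / √π := by
  have h := Gamma_mul_Gamma_add_half ((k : ℝ) + 1 / 2)
  rw [show (k : ℝ) + 1 / 2 + 1 / 2 = k + 1 by ring, Gamma_nat_eq_factorial,
    show 2 * ((k : ℝ) + 1 / 2) = ((2 * k : ℕ) : ℝ) + 1 by push_cast; ring, Gamma_nat_eq_factorial,
    show (1 : ℝ) - (((2 * k : ℕ) : ℝ) + 1) = -((2 * k : ℕ) : ℝ) by ring,
    rpow_neg zero_le_two, rpow_natCast, pow_mul] at h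
  rw [eq_div_iff (sqrt_pos.mpr pi_pos).ne', mul_assoc _ (k.factorial : ℝ),
    mul_comm (k.factorial : ℝ), h]
  field_simp
  norm_num

end Real

noncomputable def diagCoeff (k : ℕ) : ℝ :=
  (2 : ℝ) ^ (2 * k) * (k.factorial : ℝ) ^ 2 * ((4 * k + 1).factorial : ℝ) /
    ((k : ℝ) ^ ((3 : ℝ) / 4) * ((2 * k).factorial : ℝ) ^ 2 * Real.sqrt (Real.Gamma (4 * k + 5 / 2)))

theorem diagCoeff_sq_mul_eq {k : ℕ} (hk : 0 < k) :
    diagCoeff k ^ 2 * (((2 * k).factorial : ℝ) * ((2 * k).factorial : ℝ) /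
      ((2 * k + 2 * k + 1).factorial : ℝ)) =
    π * k.factorial ^ 2 * (4 * k + 1).factorial /
      (k * √k * Gamma (k + 1 / 2) ^ 2 * Gamma (4 * k + 5 / 2)) := by
  have hK : (0 : ℝ) < k := Nat.cast_pos.mpr hk
  have hG : 0 < Gamma (4 * k + 5 / 2) := Gamma_pos_of_pos (by positivity)
  have hπ : 0 < √π := sqrt_pos.mpr pi_pos
  have hpow : ((k : ℝ) ^ ((3 : ℝ) / 4)) ^ 2 = k * √k := by
    rw [← rpow_natCast, ← rpow_mul hK.le, sqrt_eq_rpow, ← rpow_one_add' hK.le (by norm_num)]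
    norm_num
  rw [diagCoeff, show 2 * k + 2 * k + 1 = 4 * k + 1 by ring, factorial_two_mul_eq_Gamma_add_half,
    pow_mul]
  conv_rhs => rw [← hpow, ← sq_sqrt pi_pos.le, ← sq_sqrt hG.le]
  field_simp
  ring

theorem one_div_le_diagCoeff_sq_mul {k : ℕ} (hk : 0 < k) :
    1 / (k : ℝ) ≤ diagCoeff k ^ 2 * (((2 * k).factorial : ℝ) * ((2 * k).factorial : ℝ) /
      ((2 * k + 2 * k + 1).factorial : ℝ)) := by
  have hK : (1 : ℝ) ≤ k := Nat.one_le_cast.mpr hk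
  have hG : 0 < Gamma (4 * k + 5 / 2) := Gamma_pos_of_pos (by positivity)
  have hlow : k * Gamma (k + 1 / 2) ^ 2 ≤ k.factorial ^ 2 :=
    calc k * Gamma (k + 1 / 2) ^ 2 ≤ k * (k * Gamma k ^ 2) := by
          gcongr; exact Gamma_add_half_sq_le (by positivity)
      _ = Gamma (k + 1) ^ 2 := by rw [Gamma_add_one (by positivity)]; ring
      _ = k.factorial ^ 2 := by rw [Gamma_nat_eq_factorial]
  have hhigh : Gamma (4 * k + 5 / 2) ≤ π * √k * (4 * k + 1).factorial := by
    refine (pow_le_pow_iff_left₀ hG.le (by positivity) two_ne_zero).mp ?_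
    have h := Gamma_add_half_sq_le (by positivity : (0 : ℝ) < (4 * k + 1 : ℕ) + 1)
    rw [Gamma_nat_eq_factorial] at h
    calc Gamma (4 * k + 5 / 2) ^ 2 ≤ ((4 * k + 1 : ℕ) + 1) * (4 * k + 1).factorial ^ 2 := by
          convert h using 3; push_cast; ring
      _ ≤ π ^ 2 * k * (4 * k + 1).factorial ^ 2 := by
          have hπ : 9 ≤ π ^ 2 := by nlinarith [pi_gt_three]
          gcongr; push_cast; nlinarith
      _ = (π * √k * (4 * k + 1).factorial) ^ 2 := by
          rw [mul_pow, mul_pow, sq_sqrt (by positivity)]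
  rw [diagCoeff_sq_mul_eq hk, le_div_iff₀ (by positivity)]
  calc 1 / (k : ℝ) * (k * √k * Gamma (k + 1 / 2) ^ 2 * Gamma (4 * k + 5 / 2))
      = √k * (k * Gamma (k + 1 / 2) ^ 2) * Gamma (4 * k + 5 / 2) / k := by ring
    _ ≤ √k * k.factorial ^ 2 * (π * √k * (4 * k + 1).factorial) / k := by gcongr
    _ = π * k.factorial ^ 2 * (4 * k + 1).factorial := by
        field_simp; rw [sq_sqrt (by positivity)]

theorem stmt9_general (a : ℕ × ℕ → ℂ)
    (hdiag : ∀ k : ℕ, 1 < k →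
      a (k, k) = (((2 : ℝ) ^ (2 * k) * (k.factorial : ℝ) ^ 2 *
          ((4 * k + 1).factorial : ℝ)) /
        ((k : ℝ) ^ ((3 : ℝ) / 4) * ((2 * k).factorial : ℝ) ^ 2 *
          Real.sqrt (Real.Gamma (4 * k + 5 / 2))) : ℝ)) :
    ¬ Summable (fun m : ℕ × ℕ => ‖a m‖ ^ 2 *
      (((2 * m.1).factorial : ℝ) * ((2 * m.2).factorial : ℝ) /
        ((2 * m.1 + 2 * m.2 + 1).factorial : ℝ))) := by
  intro hsum
  have hdiagSum : Summable fun k : ℕ => ‖a (k, k)‖ ^ 2 *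
      (((2 * k).factorial : ℝ) * ((2 * k).factorial : ℝ) / ((2 * k + 2 * k + 1).factorial : ℝ)) :=
    hsum.comp_injective fun _ _ h => (Prod.ext_iff.mp h).1
  refine not_summable_one_div_natCast (hdiagSum.of_norm_bounded_eventually_nat ?_)
  filter_upwards [Filter.eventually_gt_atTop 1] with k hk
  rw [hdiag k hk, Complex.norm_real, Real.norm_eq_abs, Real.norm_eq_abs, sq_abs,
    abs_of_nonneg (by positivity)]
  exact one_div_le_diagCoeff_sq_mul (by omega)

/-- Divergence of the series Σ |a_{m₁,m₂}|² (2m₁)!(2m₂)!/(2m₁+2m₂+1)! for the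
specific diagonal coefficients a_{k,k} = 2^{2k} k!² (4k+1)! / (k^{3/4} (2k)!² Γ(4k+5/2)^{1/2}). -/
theorem stmt9 (a : ℕ × ℕ → ℂ)
    (hdiag : ∀ k : ℕ, 1 < k →
      a (k, k) = (((2 : ℝ) ^ (2 * k) * (k.factorial : ℝ) ^ 2 *
          ((4 * k + 1).factorial : ℝ)) /
        ((k : ℝ) ^ ((3 : ℝ) / 4) * ((2 * k).factorial : ℝ) ^ 2 *
          Real.sqrt (Real.Gamma (4 * k + 5 / 2))) : ℝ))
    (hoff : ∀ m : ℕ × ℕ, (m.1 ≠ m.2 ∨ m.1 ≤ 1) → a m = 0) :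
    ¬ Summable (fun m : ℕ × ℕ => ‖a m‖ ^ 2 *
      (((2 * m.1).factorial : ℝ) * ((2 * m.2).factorial : ℝ) /
        ((2 * m.1 + 2 * m.2 + 1).factorial : ℝ))) :=
  stmt9_general a hdiag
end
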